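/- Let r₁, r₂, r₃ : ℝ → ℝ be differentiable functions that are pairwise distinct at every point, let M̂ : ℝ → ℝ, and suppose that for each i and every Θ ∈ ℝ, rᵢ'(Θ) = M̂(Θ)/∏_{j≠i}(rᵢ(Θ) − r_j(Θ)). Then the product s₃ = r₁r₂r₃ satisfies s₃'(Θ) = M̂(Θ) for every Θ ∈ ℝ. -/

import Mathlib

/-!
By the product rule `s₃' = Σᵢ rᵢ' ∏_{j≠i} r_j = M̂ · Σᵢ ∏_{j≠i} r_j / ∏_{j≠i} (rᵢ − r_j)`.
Since `∏_{j≠i} r_j = rᵢ² − s₁ rᵢ + s₂`, the last sum is the leading coefficient of the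
quadratic interpolating `x² − s₁ x + s₂` at the nodes `r₁, r₂, r₃`, that is `1`.
-/

theorem lagrange_sum_prod_others_eq_one {K : Type*} [Field K] {a b c : K}
    (hab : a ≠ b) (hac : a ≠ c) (hbc : b ≠ c) :
    b * c / ((a - b) * (a - c)) + a * c / ((b - a) * (b - c)) +
      a * b / ((c - a) * (c - b)) = 1 := by
  have hab' := sub_ne_zero.mpr hab
  have hac' := sub_ne_zero.mpr hac
  have hbc' := sub_ne_zero.mpr hbc
  field_simp
  ring

theorem deriv_mul_mul {𝕜 : Type*} [NontriviallyNormedField 𝕜] {f g h : 𝕜 → 𝕜} {x : 𝕜}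
    (hf : DifferentiableAt 𝕜 f x) (hg : DifferentiableAt 𝕜 g x) (hh : DifferentiableAt 𝕜 h x) :
    deriv (fun s => f s * g s * h s) x =
      deriv f x * (g x * h x) + deriv g x * (f x * h x) + deriv h x * (f x * g x) := by
  rw [deriv_fun_mul (c := fun s => f s * g s) (hf.mul hg) hh, deriv_fun_mul hf hg]
  ring

theorem stmt_9 (r1 r2 r3 M : ℝ → ℝ)
    (hd1 : Differentiable ℝ r1) (hd2 : Differentiable ℝ r2)
    (hd3 : Differentiable ℝ r3)
    (hne12 : ∀ Θ : ℝ, r1 Θ ≠ r2 Θ) (hne13 : ∀ Θ : ℝ, r1 Θ ≠ r3 Θ)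
    (hne23 : ∀ Θ : ℝ, r2 Θ ≠ r3 Θ)
    (hr1 : ∀ Θ : ℝ, deriv r1 Θ = M Θ / ((r1 Θ - r2 Θ) * (r1 Θ - r3 Θ)))
    (hr2 : ∀ Θ : ℝ, deriv r2 Θ = M Θ / ((r2 Θ - r1 Θ) * (r2 Θ - r3 Θ)))
    (hr3 : ∀ Θ : ℝ, deriv r3 Θ = M Θ / ((r3 Θ - r1 Θ) * (r3 Θ - r2 Θ))) :
    ∀ Θ : ℝ, deriv (fun s => r1 s * r2 s * r3 s) Θ = M Θ := by
  intro Θ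
  calc deriv (fun s => r1 s * r2 s * r3 s) Θ
      = M Θ * (r2 Θ * r3 Θ / ((r1 Θ - r2 Θ) * (r1 Θ - r3 Θ)) +
          r1 Θ * r3 Θ / ((r2 Θ - r1 Θ) * (r2 Θ - r3 Θ)) +
          r1 Θ * r2 Θ / ((r3 Θ - r1 Θ) * (r3 Θ - r2 Θ))) := by
        rw [deriv_mul_mul (hd1 Θ) (hd2 Θ) (hd3 Θ), hr1, hr2, hr3]
        ring
    _ = M Θ := by
        rw [lagrange_sum_prod_others_eq_one (hne12 Θ) (hne13 Θ) (hne23 Θ), mul_one]
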